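/- Suppose Φ(μ, λ) ∈ H¹(Ω;ℂ) depends Fréchet-differentiably on coefficients (μ, λ), with derivative Φ' in direction (ζ, ϑ) characterized by B_{μ,λ}(Φ', ψ) = -∫_Ω ζ Φ ψ̄ dx - ∫_Ω ϑ ∇Φ·∇ψ̄ dx for all ψ ∈ H¹(Ω;ℂ), where B_{μ,λ} is the FD diffusion sesquilinear form. Let Φ* solve the adjoint problem B_{μ,λ}(Φ*, ψ) = (2/(1+ρ))∫_{∂Ω} P ψ̄ dS. Then the derivative of the measurement M = ((1-ρ)/(2(1+ρ)))∫_{∂Ω} P Φ dS in direction (ζ,ϑ) equals DM[(ζ,ϑ)] = -((1-ρ)/4)(∫_Ω ζ Φ Φ* dx + ∫_Ω ϑ ∇Φ·∇Φ* dx). -/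

import Mathlib

open MeasureTheory Complex

noncomputable section

abbrev E3 := EuclideanSpace ℝ (Fin 3)

/-- `∇φ · ∇ψ̄` (with conjugation on the second factor). -/
def gradDotC (φ ψ : E3 → ℂ) (x : E3) : ℂ :=
  ∑ i : Fin 3, fderiv ℝ φ x (EuclideanSpace.single i 1) *
    (starRingEnd ℂ) (fderiv ℝ ψ x (EuclideanSpace.single i 1))

/-- `∇φ · ∇ψ` (no conjugation). -/
def gradDotN (φ ψ : E3 → ℂ) (x : E3) : ℂ :=
  ∑ i : Fin 3, fderiv ℝ φ x (EuclideanSpace.single i 1) *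
    fderiv ℝ ψ x (EuclideanSpace.single i 1)

def H1Mem (Ω : Set E3) (σ : Measure E3) (φ : E3 → ℂ) : Prop :=
  MemLp φ 2 (volume.restrict Ω) ∧
  MemLp (fun x => ‖fderiv ℝ φ x‖) 2 (volume.restrict Ω) ∧
  MemLp φ 2 σ

/-- The FD diffusion sesquilinear form with general coefficients `(μ, λ)`:
`B_{μ,λ}(φ,ψ) = ∫_Ω (λ∇φ·∇ψ̄ + (μ - iω/c)φψ̄)dx + ((1-ρ)/(2(1+ρ)))∫_{∂Ω}φψ̄ dS`. -/
def Bform (Ω : Set E3) (σ : Measure E3) (μ lam : E3 → ℝ) (ω c ρ : ℝ)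
    (φ ψ : E3 → ℂ) : ℂ :=
  (∫ x in Ω, ((lam x : ℂ) * gradDotC φ ψ x +
      ((μ x : ℂ) - Complex.I * (ω : ℂ) / (c : ℂ)) * (φ x * (starRingEnd ℂ) (ψ x)))) +
    (((1 - ρ) / (2 * (1 + ρ)) : ℝ) : ℂ) * ∫ x, φ x * (starRingEnd ℂ) (ψ x) ∂σ

lemma fderiv_conj_apply (f : E3 → ℂ) (x v : E3) :
    fderiv ℝ (fun y => (starRingEnd ℂ) (f y)) x v = (starRingEnd ℂ) (fderiv ℝ f x v) := by
  have h : (fun y => (starRingEnd ℂ) (f y)) = Complex.conjCLE ∘ f := rfl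
  rw [h, ContinuousLinearEquiv.comp_fderiv]
  simp

lemma gradDotC_conj (φ ψ : E3 → ℂ) :
    gradDotC φ (fun y => (starRingEnd ℂ) (ψ y)) = gradDotN φ ψ := by
  funext x
  unfold gradDotC gradDotN
  refine Finset.sum_congr rfl fun i _ => ?_
  rw [fderiv_conj_apply]
  simp

lemma gradDotN_symm (φ ψ : E3 → ℂ) (x : E3) : gradDotN φ ψ x = gradDotN ψ φ x := by
  unfold gradDotN
  exact Finset.sum_congr rfl fun i _ => mul_comm _ _

lemma Bform_conj_symm (Ω : Set E3) (σ : Measure E3) (μ lam : E3 → ℝ) (ω c ρ : ℝ)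
    (φ ψ : E3 → ℂ) :
    Bform Ω σ μ lam ω c ρ φ (fun y => (starRingEnd ℂ) (ψ y)) =
      Bform Ω σ μ lam ω c ρ ψ (fun y => (starRingEnd ℂ) (φ y)) := by
  unfold Bform
  rw [gradDotC_conj, gradDotC_conj]
  congr 1
  · refine integral_congr_ae (Filter.Eventually.of_forall fun x => ?_)
    simp only [Complex.conj_conj]
    rw [gradDotN_symm]
    ring
  · congr 1
    refine integral_congr_ae (Filter.Eventually.of_forall fun x => ?_)
    simp only [Complex.conj_conj]
    ring

/-- Adjoint method for the measurement derivative: if `Φ'` is the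
Fréchet derivative of the forward solution `Φ` in direction `(ζ, ϑ)`, characterized by
`B_{μ,λ}(Φ', ψ) = -∫_Ω ζ Φ ψ̄ - ∫_Ω ϑ ∇Φ·∇ψ̄` for all `ψ ∈ H¹(Ω;ℂ)`, and `Φ*` solves
the adjoint problem `B_{μ,λ}(Φ*, ψ) = (2/(1+ρ))∫_{∂Ω} P ψ̄ dS`, then the derivative of
the measurement `M = ((1-ρ)/(2(1+ρ)))∫_{∂Ω} P Φ dS` in direction `(ζ,ϑ)`, namely
`DM[(ζ,ϑ)] = ((1-ρ)/(2(1+ρ)))∫_{∂Ω} P Φ' dS`, equals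
`-((1-ρ)/4)(∫_Ω ζ Φ Φ* dx + ∫_Ω ϑ ∇Φ·∇Φ* dx)`. -/
theorem stmt16 (Ω : Set E3) (hΩopen : IsOpen Ω) (hΩbd : Bornology.IsBounded Ω)
    (σ : Measure E3) (hσsupp : σ (frontier Ω)ᶜ = 0)
    (μ lam : E3 → ℝ) (ω c ρ : ℝ) (hc : 0 < c) (hρ : ρ ∈ Set.Ico (0 : ℝ) 1)
    (ζ ϑ : E3 → ℝ) (P : E3 → ℂ) (Φ Φ' Φstar : E3 → ℂ)
    (hΦ : H1Mem Ω σ Φ) (hΦ' : H1Mem Ω σ Φ') (hΦstar : H1Mem Ω σ Φstar)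
    (hΦ'conj : H1Mem Ω σ fun x => (starRingEnd ℂ) (Φ' x))
    (hΦstarconj : H1Mem Ω σ fun x => (starRingEnd ℂ) (Φstar x))
    (hsens : ∀ ψ : E3 → ℂ, H1Mem Ω σ ψ →
      Bform Ω σ μ lam ω c ρ Φ' ψ =
        -(∫ x in Ω, ((ζ x : ℂ) * (Φ x * (starRingEnd ℂ) (ψ x))))
          - ∫ x in Ω, ((ϑ x : ℂ) * gradDotC Φ ψ x))
    (hadjoint : ∀ ψ : E3 → ℂ, H1Mem Ω σ ψ →
      Bform Ω σ μ lam ω c ρ Φstar ψ =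
        ((2 / (1 + ρ) : ℝ) : ℂ) * ∫ x, P x * (starRingEnd ℂ) (ψ x) ∂σ) :
    (((1 - ρ) / (2 * (1 + ρ)) : ℝ) : ℂ) * (∫ x, P x * Φ' x ∂σ) =
      -(((1 - ρ) / 4 : ℝ) : ℂ) *
        ((∫ x in Ω, (ζ x : ℂ) * (Φ x * Φstar x)) +
          ∫ x in Ω, (ϑ x : ℂ) * gradDotN Φ Φstar x) := by
  have hρ1 : (1 : ℝ) + ρ ≠ 0 := by linarith [hρ.1]
  have h1 := hadjoint (fun x => (starRingEnd ℂ) (Φ' x)) hΦ'conj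
  have h2 := hsens (fun x => (starRingEnd ℂ) (Φstar x)) hΦstarconj
  rw [Bform_conj_symm] at h1
  simp only [Complex.conj_conj] at h1
  simp only [Complex.conj_conj, gradDotC_conj] at h2
  have hkey : ((2 / (1 + ρ) : ℝ) : ℂ) * ∫ x, P x * Φ' x ∂σ =
      -(∫ x in Ω, (ζ x : ℂ) * (Φ x * Φstar x))
        - ∫ x in Ω, (ϑ x : ℂ) * gradDotN Φ Φstar x := by
    rw [← h1, h2]
  have hcoef : (((1 - ρ) / (2 * (1 + ρ)) : ℝ) : ℂ) =
      (((1 - ρ) / 4 : ℝ) : ℂ) * ((2 / (1 + ρ) : ℝ) : ℂ) := by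
    push_cast
    have : ((1 : ℂ) + ρ) ≠ 0 := by exact_mod_cast hρ1
    field_simp
    ring
  rw [hcoef, mul_assoc, hkey]
  ring


end
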